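/- For every v ∈ H with 𝐈v = v one has T(2T*v − 𝐉v) = v and 2T*(Tv) − 𝐉(Tv) = v (so the restriction T⁺ of T to H⁺ is invertible with inverse the restriction of 2T* − 𝐉), and moreover 2Tv + 2T*v − 𝐉v = −3𝐉(Bv) = −3B(𝐉v). -/

import Mathlib

noncomputable section

abbrev SL2Z := Matrix.SpecialLinearGroup (Fin 2) ℤ

def Lmat : SL2Z := ⟨!![1, 1; 0, 1], by decide⟩
def Rmat : SL2Z := ⟨!![1, 0; 1, 1], by decide⟩
def Jmat : SL2Z := ⟨!![0, 1; -1, 0], by decide⟩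
def Imat : SL2Z := ⟨!![-1, 0; 0, -1], by decide⟩

variable {H : Type*} [NormedAddCommGroup H] [InnerProductSpace ℂ H] [CompleteSpace H]

/-- The bounded operator associated to a group element by the unitary representation. -/
def rop (ρ : SL2Z →* unitary (H →L[ℂ] H)) (g : SL2Z) : H →L[ℂ] H := (ρ g : H →L[ℂ] H)

/-- The Markov operator T = (𝐋 + 𝐑)/2. -/
def opT (ρ : SL2Z →* unitary (H →L[ℂ] H)) : H →L[ℂ] H := (2 : ℂ)⁻¹ • (rop ρ Lmat + rop ρ Rmat)

/-- Y₊ = (1/3)((3/2)·id − (1/2)𝐈 + 𝐑⁻¹𝐋 + 𝐋⁻¹𝐑). -/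
def opYp (ρ : SL2Z →* unitary (H →L[ℂ] H)) : H →L[ℂ] H :=
  (3 : ℂ)⁻¹ • ((3 / 2 : ℂ) • (1 : H →L[ℂ] H) - (2 : ℂ)⁻¹ • rop ρ Imat
    + rop ρ Rmat⁻¹ * rop ρ Lmat + rop ρ Lmat⁻¹ * rop ρ Rmat)

/-- Y₋ = 𝐉* Y₊ 𝐉. -/
def opYm (ρ : SL2Z →* unitary (H →L[ℂ] H)) : H →L[ℂ] H :=
  ContinuousLinearMap.adjoint (rop ρ Jmat) * opYp ρ * rop ρ Jmat

/-- B = id − Y₊ − Y₋. -/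
def opB (ρ : SL2Z →* unitary (H →L[ℂ] H)) : H →L[ℂ] H := 1 - opYp ρ - opYm ρ

/-!
Unitarity gives T* = (𝐋⁻¹ + 𝐑⁻¹)/2, so every identity expands into words in 𝐋, 𝐑, 𝐉, 𝐈. These
collapse by a few relations in SL(2,ℤ): LR⁻¹ = RJ and JR = R⁻¹L hold exactly, RL⁻¹ = LJ and
JL = L⁻¹R hold up to the central element −1, which acts trivially on H⁺. Since J² = −1 is central,
𝐉 commutes with Y₊ + Y₋ and hence with B on all of H.
-/

theorem Imat_mul_comm (g : SL2Z) : Imat * g = g * Imat := by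
  have hI : (Imat : Matrix (Fin 2) (Fin 2) ℤ) = -1 := by decide
  ext : 1
  simp [hI]

theorem Jmat_mul_Jmat : Jmat * Jmat = Imat := Subtype.ext (by decide)

theorem Lmat_mul_Rmat_inv : Lmat * Rmat⁻¹ = Rmat * Jmat := Subtype.ext (by decide)

theorem Rmat_mul_Lmat_inv : Rmat * Lmat⁻¹ = Lmat * Jmat * Imat := Subtype.ext (by decide)

theorem Jmat_mul_Rmat : Jmat * Rmat = Rmat⁻¹ * Lmat := Subtype.ext (by decide)

theorem Jmat_mul_Lmat : Jmat * Lmat = Lmat⁻¹ * Rmat * Imat := Subtype.ext (by decide)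

theorem Jmat_mul_Rmat_inv_mul_Lmat : Jmat * (Rmat⁻¹ * Lmat) = Rmat * Imat :=
  Subtype.ext (by decide)

theorem Jmat_mul_Lmat_inv_mul_Rmat : Jmat * (Lmat⁻¹ * Rmat) = Lmat := Subtype.ext (by decide)

theorem Rmat_inv_mul_Lmat_mul_Jmat : Rmat⁻¹ * Lmat * Jmat = Lmat⁻¹ * Imat :=
  Subtype.ext (by decide)

theorem Lmat_inv_mul_Rmat_mul_Jmat : Lmat⁻¹ * Rmat * Jmat = Rmat⁻¹ := Subtype.ext (by decide)

section Representation

open ContinuousLinearMap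

variable (ρ : SL2Z →* unitary (H →L[ℂ] H))

theorem rop_mul (g h : SL2Z) : rop ρ (g * h) = rop ρ g * rop ρ h := by
  simp [rop]

theorem rop_mul_apply (g h : SL2Z) (v : H) : rop ρ g (rop ρ h v) = rop ρ (g * h) v := by
  rw [rop_mul, mul_apply_eq_comp]

theorem rop_one : rop ρ 1 = 1 := by
  simp [rop]

theorem adjoint_rop (g : SL2Z) : adjoint (rop ρ g) = rop ρ g⁻¹ := by
  rw [← star_eq_adjoint, rop, rop, map_inv, ← Unitary.star_eq_inv, Unitary.coe_star]

theorem adjoint_opT : adjoint (opT ρ) = (2 : ℂ)⁻¹ • (rop ρ Lmat⁻¹ + rop ρ Rmat⁻¹) := by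
  rw [opT, map_smulₛₗ, map_add, adjoint_rop, adjoint_rop]
  norm_num [Complex.conj_ofNat]

theorem commute_rop_Imat (g : SL2Z) : Commute (rop ρ Imat) (rop ρ g) := by
  rw [Commute, SemiconjBy, ← rop_mul, ← rop_mul, Imat_mul_comm]

theorem commute_rop_Imat_opYp : Commute (rop ρ Imat) (opYp ρ) := by
  have hc := commute_rop_Imat ρ
  exact (((((Commute.one_right _).smul_right _).sub_right ((hc _).smul_right _)).add_right
    ((hc _).mul_right (hc _))).add_right ((hc _).mul_right (hc _))).smul_right _

theorem rop_Jmat_mul_opB :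
    rop ρ Jmat * opB ρ = rop ρ Jmat - rop ρ Jmat * opYp ρ - opYp ρ * rop ρ Jmat := by
  rw [opB, opYm, adjoint_rop, mul_sub, mul_sub, mul_one, ← mul_assoc, ← mul_assoc, ← rop_mul,
    mul_inv_cancel, rop_one, one_mul]

theorem opB_mul_rop_Jmat :
    opB ρ * rop ρ Jmat = rop ρ Jmat - rop ρ Jmat * opYp ρ - opYp ρ * rop ρ Jmat := by
  have hconj : rop ρ Jmat⁻¹ * opYp ρ * rop ρ Jmat * rop ρ Jmat = rop ρ Jmat * opYp ρ := by
    rw [mul_assoc, ← rop_mul, Jmat_mul_Jmat, mul_assoc, ← (commute_rop_Imat_opYp ρ).eq,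
      ← mul_assoc, ← rop_mul, ← Jmat_mul_Jmat, inv_mul_cancel_left]
  rw [opB, opYm, adjoint_rop, sub_mul, sub_mul, one_mul, hconj]
  abel

theorem commute_rop_Jmat_opB : Commute (rop ρ Jmat) (opB ρ) :=
  (rop_Jmat_mul_opB ρ).trans (opB_mul_rop_Jmat ρ).symm

variable {ρ} {v : H}

theorem rop_mul_Imat_apply (hv : rop ρ Imat v = v) (g : SL2Z) :
    rop ρ (g * Imat) v = rop ρ g v := by
  rw [← rop_mul_apply, hv]

theorem rop_Imat_rop_apply (hv : rop ρ Imat v = v) (g : SL2Z) :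
    rop ρ Imat (rop ρ g v) = rop ρ g v := by
  rw [rop_mul_apply, Imat_mul_comm, rop_mul_Imat_apply hv]

theorem three_smul_opYp_apply (hv : rop ρ Imat v = v) :
    (3 : ℂ) • opYp ρ v = v + rop ρ (Rmat⁻¹ * Lmat) v + rop ρ (Lmat⁻¹ * Rmat) v := by
  simp only [opYp, smul_apply, add_apply, sub_apply, mul_apply_eq_comp, one_apply_eq_self, hv,
    rop_mul_apply, smul_smul]
  module

theorem opT_two_smul_adjoint_sub_rop_Jmat_apply (hv : rop ρ Imat v = v) :
    opT ρ ((2 : ℂ) • adjoint (opT ρ) v - rop ρ Jmat v) = v := by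
  rw [adjoint_opT]
  simp only [opT, add_apply, smul_apply, map_add, map_sub, map_smul, smul_smul,
    rop_mul_apply, mul_inv_cancel, rop_one, one_apply_eq_self, Lmat_mul_Rmat_inv,
    Rmat_mul_Lmat_inv, rop_mul_Imat_apply hv]
  module

theorem two_smul_adjoint_opT_sub_rop_Jmat_apply_opT (hv : rop ρ Imat v = v) :
    (2 : ℂ) • adjoint (opT ρ) (opT ρ v) - rop ρ Jmat (opT ρ v) = v := by
  rw [adjoint_opT]
  simp only [opT, add_apply, smul_apply, map_add, map_smul, smul_smul,
    rop_mul_apply, inv_mul_cancel, rop_one, one_apply_eq_self, Jmat_mul_Rmat, Jmat_mul_Lmat,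
    rop_mul_Imat_apply hv]
  module

theorem neg_three_smul_rop_Jmat_opB_apply (hv : rop ρ Imat v = v) :
    (-3 : ℂ) • rop ρ Jmat (opB ρ v)
      = rop ρ Lmat v + rop ρ Rmat v + rop ρ Lmat⁻¹ v + rop ρ Rmat⁻¹ v - rop ρ Jmat v := by
  have hJYp : (3 : ℂ) • rop ρ Jmat (opYp ρ v) = rop ρ Jmat v + rop ρ Rmat v + rop ρ Lmat v := by
    rw [← map_smul, three_smul_opYp_apply hv, map_add, map_add, rop_mul_apply, rop_mul_apply,
      Jmat_mul_Rmat_inv_mul_Lmat, Jmat_mul_Lmat_inv_mul_Rmat, rop_mul_Imat_apply hv]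
  have hYpJ :
      (3 : ℂ) • opYp ρ (rop ρ Jmat v) = rop ρ Jmat v + rop ρ Lmat⁻¹ v + rop ρ Rmat⁻¹ v := by
    rw [three_smul_opYp_apply (rop_Imat_rop_apply hv Jmat), rop_mul_apply, rop_mul_apply,
      Rmat_inv_mul_Lmat_mul_Jmat, Lmat_inv_mul_Rmat_mul_Jmat, rop_mul_Imat_apply hv]
  rw [← mul_apply_eq_comp, rop_Jmat_mul_opB]
  simp only [sub_apply, mul_apply_eq_comp]
  linear_combination (norm := module) hJYp + hYpJ

end Representation

/-- For every v ∈ H with 𝐈v = v one has T(2T*v − 𝐉v) = v and 2T*(Tv) − 𝐉(Tv) = v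
(so T⁺ is invertible with inverse the restriction of 2T* − 𝐉), and moreover
2Tv + 2T*v − 𝐉v = −3𝐉(Bv) = −3B(𝐉v). -/
theorem Tplus_invertible_and_TJB_formula (ρ : SL2Z →* unitary (H →L[ℂ] H))
    (v : H) (hv : rop ρ Imat v = v) :
    opT ρ ((2 : ℂ) • ContinuousLinearMap.adjoint (opT ρ) v - rop ρ Jmat v) = v ∧
    (2 : ℂ) • ContinuousLinearMap.adjoint (opT ρ) (opT ρ v) - rop ρ Jmat (opT ρ v) = v ∧
    (2 : ℂ) • opT ρ v + (2 : ℂ) • ContinuousLinearMap.adjoint (opT ρ) v - rop ρ Jmat v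
      = (-3 : ℂ) • rop ρ Jmat (opB ρ v) ∧
    (-3 : ℂ) • rop ρ Jmat (opB ρ v) = (-3 : ℂ) • opB ρ (rop ρ Jmat v) := by
  refine ⟨opT_two_smul_adjoint_sub_rop_Jmat_apply hv,
    two_smul_adjoint_opT_sub_rop_Jmat_apply_opT hv, ?_, ?_⟩
  · rw [neg_three_smul_rop_Jmat_opB_apply hv, adjoint_opT, opT]
    simp only [smul_apply, add_apply, smul_smul]
    module
  · rw [← mul_apply_eq_comp, (commute_rop_Jmat_opB ρ).eq, mul_apply_eq_comp]
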